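/- For every integer m ≥ 1, the q-Genocchi numbers satisfy Σ_{k=0}^{m} [m choose k]_q · ((−1;q)_{m−k}/2^{m−k}) · g_{k,q} + g_{m,q} = 2 if m = 1, and = 0 if m > 1. -/

import Mathlib

open Finset PowerSeries

/-- The `q`-number `[n]_q = (1 - q^n)/(1 - q)`. -/
noncomputable def qNum (q : ℂ) (n : ℕ) : ℂ := (1 - q ^ n) / (1 - q)

/-- The `q`-factorial `[n]_q!`. -/
noncomputable def qFact (q : ℂ) : ℕ → ℂ
  | 0 => 1
  | n + 1 => qNum q (n + 1) * qFact q n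

/-- The `q`-shifted factorial `(a; q)_n = ∏_{j=0}^{n-1} (1 - q^j a)`. -/
noncomputable def qShift (a q : ℂ) (n : ℕ) : ℂ := ∏ j ∈ Finset.range n, (1 - q ^ j * a)

/-- The Gaussian binomial coefficient `[n choose k]_q = (q;q)_n / ((q;q)_{n-k} (q;q)_k)`. -/
noncomputable def qBinom (q : ℂ) (n k : ℕ) : ℂ :=
  qShift q q n / (qShift q q (n - k) * qShift q q k)

/-- The formal power series (in `t`) `𝓔_q(tx) = Σ_{n≥0} (-1;q)_n (x)^n t^n / (2^n [n]_q!)`. -/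
noncomputable def qExp (q x : ℂ) : PowerSeries ℂ :=
  PowerSeries.mk fun n => qShift (-1) q n * x ^ n / (2 ^ n * qFact q n)

/-- The generating series `Σ_{n≥0} a_n t^n / [n]_q!` of a sequence `a`. -/
noncomputable def qGen (q : ℂ) (a : ℕ → ℂ) : PowerSeries ℂ :=
  PowerSeries.mk fun n => a n / qFact q n

/-- The `q`-addition `(x ⊕_q y)^n`. -/
noncomputable def qAdd (q x y : ℂ) (n : ℕ) : ℂ :=
  ∑ k ∈ Finset.range (n + 1),
    qBinom q n k * (qShift (-1) q k * qShift (-1) q (n - k) / 2 ^ n) * x ^ k * y ^ (n - k)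

/-!
Both sides of the defining identity `Σ g_n tⁿ/[n]_q! · (𝓔_q(t) + 1) = 2t` are `q`-exponential
generating series, and the product of two such series is the series of the `q`-binomial
convolution `Σ_k [n choose k]_q a_k b_{n-k}`. Comparing the `m`-th coefficients gives the
recurrence.
-/

lemma pow_ne_one_of_not_isOfFinOrder {M : Type*} [Monoid M] {x : M} (hx : ¬IsOfFinOrder x)
    {n : ℕ} (hn : n ≠ 0) : x ^ n ≠ 1 :=
  fun h => hx (isOfFinOrder_iff_pow_eq_one.2 ⟨n, Nat.pos_of_ne_zero hn, h⟩)

lemma ne_one_of_not_isOfFinOrder {M : Type*} [Monoid M] {x : M} (hx : ¬IsOfFinOrder x) :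
    x ≠ 1 := by
  rintro rfl
  exact hx IsOfFinOrder.one

lemma not_isOfFinOrder_of_norm_lt_one {q : ℂ} (hq : ‖q‖ < 1) : ¬IsOfFinOrder q :=
  fun h => hq.ne h.norm_eq_one

section

variable {q : ℂ}

lemma qFact_ne_zero (hq : ¬IsOfFinOrder q) (n : ℕ) : qFact q n ≠ 0 := by
  have h1 : 1 - q ≠ 0 := sub_ne_zero.2 (ne_one_of_not_isOfFinOrder hq).symm
  induction n with
  | zero => exact one_ne_zero
  | succ n ih =>
    refine mul_ne_zero (div_ne_zero ?_ h1) ih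
    exact sub_ne_zero.2 (pow_ne_one_of_not_isOfFinOrder hq n.succ_ne_zero).symm

lemma qFact_one (hq : q ≠ 1) : qFact q 1 = 1 := by
  simp [qFact, qNum, sub_ne_zero.2 hq.symm]

lemma qShift_self (hq : q ≠ 1) (n : ℕ) : qShift q q n = (1 - q) ^ n * qFact q n := by
  induction n with
  | zero => simp [qShift, qFact]
  | succ n ih =>
    rw [qShift, prod_range_succ, ← qShift, ih, qFact, qNum]
    field_simp [sub_ne_zero.2 hq.symm]
    ring

lemma qBinom_eq_qFact_div (hq : q ≠ 1) {n k : ℕ} (hk : k ≤ n) :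
    qBinom q n k = qFact q n / (qFact q k * qFact q (n - k)) := by
  have hpow : (1 - q) ^ (n - k) * (1 - q) ^ k = (1 - q) ^ n := by
    rw [← pow_add, Nat.sub_add_cancel hk]
  rw [qBinom, qShift_self hq, qShift_self hq, qShift_self hq,
    mul_mul_mul_comm, hpow, mul_div_mul_left _ _ (pow_ne_zero _ (sub_ne_zero.2 hq.symm)),
    mul_comm (qFact q (n - k))]

lemma coeff_qGen (a : ℕ → ℂ) (n : ℕ) : coeff n (qGen q a) = a n / qFact q n :=
  coeff_mk _ _

lemma qGen_injective (hq : ¬IsOfFinOrder q) : Function.Injective (qGen q) := by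
  intro a b h
  funext n
  have := congrArg (coeff n) h
  rwa [coeff_qGen, coeff_qGen, div_left_inj' (qFact_ne_zero hq n)] at this

lemma qGen_add (a b : ℕ → ℂ) : qGen q a + qGen q b = qGen q (a + b) := by
  ext n
  simp only [map_add, coeff_qGen, Pi.add_apply, add_div]

lemma qGen_mul_qGen (hq : ¬IsOfFinOrder q) (a b : ℕ → ℂ) :
    qGen q a * qGen q b =
      qGen q fun n => ∑ k ∈ range (n + 1), qBinom q n k * a k * b (n - k) := by
  ext n
  rw [coeff_mul, Nat.sum_antidiagonal_eq_sum_range_succ_mk, coeff_qGen, sum_div]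
  refine sum_congr rfl fun k hk => ?_
  rw [coeff_qGen, coeff_qGen,
    qBinom_eq_qFact_div (ne_one_of_not_isOfFinOrder hq) (Nat.lt_succ_iff.1 (mem_range.1 hk))]
  field_simp [qFact_ne_zero hq]

lemma qExp_one : qExp q 1 = qGen q fun n => qShift (-1) q n / 2 ^ n := by
  ext n
  rw [qExp, coeff_mk, coeff_qGen, one_pow, mul_one, div_div]

lemma two_mul_X_eq_qGen (hq : q ≠ 1) : 2 * X = qGen q fun n => if n = 1 then 2 else 0 := by
  ext n
  rw [coeff_qGen, ← map_ofNat C, coeff_C_mul, coeff_X]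
  split_ifs with hn
  · rw [hn, qFact_one hq, mul_one, div_one]
  · rw [mul_zero, zero_div]

end

theorem qGenocchi_recurrence_general (q : ℂ) (hq1 : ‖q‖ < 1)
    (g : ℕ → ℂ) (hg : qGen q g * (qExp q 1 + 1) = 2 * PowerSeries.X)
    (m : ℕ) :
    (∑ k ∈ Finset.range (m + 1),
        qBinom q m k * (qShift (-1) q (m - k) / 2 ^ (m - k)) * g k) + g m
      = if m = 1 then 2 else 0 := by
  have hq := not_isOfFinOrder_of_norm_lt_one hq1
  rw [mul_add, mul_one, qExp_one, qGen_mul_qGen hq, qGen_add,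
    two_mul_X_eq_qGen (ne_one_of_not_isOfFinOrder hq)] at hg
  have hm := congrFun (qGen_injective hq hg) m
  simp only [Pi.add_apply] at hm
  rw [← hm]
  congr 1
  exact sum_congr rfl fun k _ => mul_right_comm _ _ _

/-- The recurrence for the `q`-Genocchi numbers `g_{n,q}`, which are defined by
`2t/(𝓔_q(t)+1) = Σ_{n≥0} g_{n,q} t^n/[n]_q!`. -/
theorem qGenocchi_recurrence (q : ℂ) (hq0 : 0 < ‖q‖) (hq1 : ‖q‖ < 1)
    (g : ℕ → ℂ) (hg : qGen q g * (qExp q 1 + 1) = 2 * PowerSeries.X)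
    (m : ℕ) (hm : 1 ≤ m) :
    (∑ k ∈ Finset.range (m + 1),
        qBinom q m k * (qShift (-1) q (m - k) / 2 ^ (m - k)) * g k) + g m
      = if m = 1 then 2 else 0 :=
  qGenocchi_recurrence_general q hq1 g hg m
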